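/- If A is a perinormal AGCD domain, then A is integrally closed. -/

import Mathlib

open scoped nonZeroDivisors

section Defs

variable (A : Type*) [CommRing A] [IsDomain A]

/-- The localization of `A` at the prime `P`, realized as a subset of the `A`-algebra `K`. -/
def locSet (K : Type*) [CommRing K] [Algebra A K] (P : Ideal A) : Set K :=
  {x | ∃ a s : A, s ∉ P ∧ x * algebraMap A K s = algebraMap A K a}

/-- `P` is a valued prime of `A` if `A_P` is a valuation domain. -/
def ValuedPrime (P : Ideal A) : Prop :=
  ∃ h : P.IsPrime, ValuationRing (Localization.AtPrime P)

/-- `A` is an essential domain if it is the intersection of its localizations at valued primes. -/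
def IsEssential : Prop :=
  Set.range (algebraMap A (FractionRing A)) =
    ⋂ P ∈ {P : Ideal A | ValuedPrime A P}, locSet A (FractionRing A) P

/-- An overring `B` of `A` is a lying over overring if `Spec B → Spec A` is surjective. -/
def LyingOverOverring (B : Subalgebra A (FractionRing A)) : Prop :=
  ∀ P : Ideal A, P.IsPrime → ∃ Q : Ideal B, Q.IsPrime ∧ Q.comap (algebraMap A B) = P

/-- An overring `B` of `A` is a going down overring if going down holds for `A ⊆ B`. -/
def GoingDownOverring (B : Subalgebra A (FractionRing A)) : Prop :=
  ∀ P' P : Ideal A, P'.IsPrime → P.IsPrime → P' ≤ P →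
    ∀ Q : Ideal B, Q.IsPrime → Q.comap (algebraMap A B) = P →
      ∃ Q' : Ideal B, Q'.IsPrime ∧ Q' ≤ Q ∧ Q'.comap (algebraMap A B) = P'

/-- `A` is perinormal if every going down overring of `A` is a flat `A`-module. -/
def Perinormal : Prop :=
  ∀ B : Subalgebra A (FractionRing A), GoingDownOverring A B → Module.Flat A B

/-- `A` is globally perinormal if every going down overring of `A` is a fraction ring of `A`. -/
def GloballyPerinormal : Prop :=
  ∀ B : Subalgebra A (FractionRing A), GoingDownOverring A B →
    ∃ S : Submonoid A, IsLocalization S B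

/-- `A` is a P-domain if `A_P` is a valuation domain for each prime `P` minimal over an ideal
of the form `(Aa : b)`. -/
def IsPDomain : Prop :=
  ∀ P : Ideal A,
    (∃ a b : A, P ∈ ((Ideal.span {a} : Ideal A).colon (Ideal.span {b})).minimalPrimes) →
      ValuedPrime A P

/-- `A` is a PVMD if for every finitely generated nonzero ideal `I` there is a finitely
generated nonzero ideal `J` with `(IJ)_v` principal. -/
def IsPVMD : Prop :=
  ∀ I : Ideal A, I ≠ ⊥ → I.FG → ∃ J : Ideal A, J ≠ ⊥ ∧ J.FG ∧
    ∃ x : FractionRing A,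
      1 / (1 / ((I : FractionalIdeal A⁰ (FractionRing A)) * (J : FractionalIdeal A⁰ (FractionRing A)))) =
        FractionalIdeal.spanSingleton A⁰ x

/-- `A` is treed if incomparable primes of `A` are comaximal. -/
def Treed : Prop :=
  ∀ P Q : Ideal A, P.IsPrime → Q.IsPrime → ¬ P ≤ Q → ¬ Q ≤ P → P ⊔ Q = ⊤

/-- `A` is a Prüfer domain if all its localizations at maximal ideals are valuation domains. -/
def IsPrueferDom : Prop :=
  ∀ M : Ideal A, M.IsMaximal → ValuedPrime A M

/-- The set of height one primes of `A`. -/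
def HtOnePrimes : Set (Ideal A) :=
  {P : Ideal A | P.IsPrime ∧ P ≠ ⊥ ∧ ∀ Q : Ideal A, Q.IsPrime → Q < P → Q = ⊥}

/-- `A` is a generalized Krull domain. -/
def IsGenKrull : Prop :=
  (Set.range (algebraMap A (FractionRing A)) =
      ⋂ P ∈ HtOnePrimes A, locSet A (FractionRing A) P) ∧
  (∀ a : A, a ≠ 0 → {P ∈ HtOnePrimes A | a ∈ P}.Finite) ∧
  (∀ P ∈ HtOnePrimes A, ValuedPrime A P)

/-- `A` is an almost GCD domain. -/
def IsAGCD : Prop :=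
  ∀ x y : A, ∃ n : ℕ, 1 ≤ n ∧
    ∃ z : A, Ideal.span {x ^ n} ⊓ Ideal.span {y ^ n} = Ideal.span {z}

/-- `A` has torsion class group (stated for a PVMD): every finitely generated nonzero
fractional ideal has a power whose `v`-closure is principal. -/
def TorsionClassGroup : Prop :=
  ∀ H : FractionalIdeal A⁰ (FractionRing A), H ≠ 0 →
    (H : Submodule A (FractionRing A)).FG →
      ∃ n : ℕ, 1 ≤ n ∧ ∃ x : FractionRing A,
        1 / (1 / (H ^ n)) = FractionalIdeal.spanSingleton A⁰ x

/-- An overring `B` of `A` is t-linked over `A`. -/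
def TLinked (B : Subalgebra A (FractionRing A)) : Prop :=
  ∀ I : Ideal A, I ≠ ⊥ → I.FG →
    ({x : FractionRing A | ∀ y ∈ I, x * algebraMap A (FractionRing A) y ∈
        Set.range (algebraMap A (FractionRing A))} =
      Set.range (algebraMap A (FractionRing A))) →
    ({x : FractionRing A | ∀ y ∈ I, x * algebraMap A (FractionRing A) y ∈ (B : Set (FractionRing A))} =
      (B : Set (FractionRing A)))

end Defs

/-!
Over an AGCD domain every element `x` of the integral closure `A'` has a power in `A`: writing
`x = a / s` and `aⁿA ∩ sⁿA = zA`, the fraction `xⁿ = aⁿ / sⁿ` can be put in lowest terms `b / c`,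
and the integral equation of `xⁿ` forces `c` to be a unit. Hence a prime of `A'` is determined by
its contraction to `A`, so `A ⊆ A'` satisfies going down. Perinormality makes `A'` flat over
`A`; being integral it is then faithfully flat, so `sA' ∩ A = sA` for all `s`, which gives `A' = A`.
-/

open Polynomial

theorem dvd_of_dvd_pow_mul_of_forall_dvd_mul {M : Type*} [CommMonoid M] {b c : M}
    (h : ∀ t, c ∣ b * t → c ∣ t) (k : ℕ) {t : M} (ht : c ∣ b ^ k * t) : c ∣ t := by
  induction k generalizing t with
  | zero => simpa using ht
  | succ k ih => exact h t (ih (by rwa [← mul_assoc, ← pow_succ]))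

def Algebra.IsRootExtension (A B : Type*) [CommRing A] [CommRing B] [Algebra A B] : Prop :=
  ∀ b : B, ∃ n : ℕ, n ≠ 0 ∧ b ^ n ∈ Set.range (algebraMap A B)

theorem Algebra.IsRootExtension.le_of_comap_le {A B : Type*} [CommRing A] [CommRing B]
    [Algebra A B] (hAB : Algebra.IsRootExtension A B) {Q₁ Q₂ : Ideal B} [Q₂.IsPrime]
    (hle : Q₁.comap (algebraMap A B) ≤ Q₂.comap (algebraMap A B)) : Q₁ ≤ Q₂ := by
  intro b hb
  obtain ⟨n, hn, u, hu⟩ := hAB b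
  have hu₁ : u ∈ Q₁.comap (algebraMap A B) := by
    rw [Ideal.mem_comap, hu]
    exact Ideal.pow_mem_of_mem Q₁ hb n (Nat.pos_of_ne_zero hn)
  have hu₂ : b ^ n ∈ Q₂ := hu ▸ hle hu₁
  exact Ideal.IsPrime.mem_of_pow_mem ‹_› n hu₂

section

variable {A : Type*} [CommRing A] {K : Type*} [Field K] [Algebra A K] [IsFractionRing A K]

theorem exists_algebraMap_eq_of_isIntegral_of_reduced {x : K} (hx : IsIntegral A x) {b c : A}
    (hxbc : x * algebraMap A K c = algebraMap A K b) (hred : ∀ t, c ∣ b * t → c ∣ t) :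
    ∃ u : A, algebraMap A K u = x := by
  obtain ⟨p, hmonic, hp⟩ := hx
  have hroot : (p.scaleRoots c).IsRoot b := by
    apply isRoot_of_eval₂_map_eq_zero (IsFractionRing.injective A K)
    rw [← hxbc, mul_comm x]
    exact scaleRoots_eval₂_eq_zero _ hp
  have hdvd : c ∣ b ^ p.natDegree := by
    have := dvd_term_of_isRoot_of_dvd_terms (p := c) p.natDegree hroot fun j hj ↦ ?_
    · rwa [← natDegree_scaleRoots p c, ((monic_scaleRoots_iff c).mpr hmonic).coeff_natDegree,
        one_mul, natDegree_scaleRoots] at this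
    rcases lt_or_gt_of_ne hj with hlt | hgt
    · rw [coeff_scaleRoots]
      exact (dvd_mul_of_dvd_right (dvd_pow_self c (Nat.sub_ne_zero_of_lt hlt)) _).mul_right _
    · rw [coeff_eq_zero_of_natDegree_lt (by rwa [natDegree_scaleRoots]), zero_mul]
      exact dvd_zero c
  obtain ⟨e, he⟩ := dvd_of_dvd_pow_mul_of_forall_dvd_mul hred p.natDegree (t := 1)
    (by rwa [mul_one])
  refine ⟨b * e, ?_⟩
  rw [map_mul, ← hxbc, mul_assoc, ← map_mul, ← he, map_one, mul_one]

variable [IsDomain A]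

-- `c = z / a` and `b = z / s`, so `b / c = a / s` is a fraction in lowest terms.
theorem exists_reduced_fraction_of_inf_eq_span {a s z : A} (ha : a ≠ 0) (hs : s ≠ 0)
    (hz : Ideal.span {a} ⊓ Ideal.span {s} = Ideal.span {z}) :
    ∃ b c : A, c ≠ 0 ∧ a * c = s * b ∧ ∀ t, c ∣ b * t → c ∣ t := by
  have mem_iff (y : A) : a ∣ y ∧ s ∣ y ↔ z ∣ y := by
    rw [← Ideal.mem_span_singleton, ← Ideal.mem_span_singleton, ← Ideal.mem_span_singleton,
      ← hz, Ideal.mem_inf]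
  obtain ⟨⟨c, hc⟩, ⟨b, hb⟩⟩ := (mem_iff z).mpr dvd_rfl
  have hc0 : c ≠ 0 := by
    rintro rfl
    obtain ⟨w, hw⟩ := (mem_iff (a * s)).mp ⟨dvd_mul_right a s, dvd_mul_left s a⟩
    exact mul_ne_zero ha hs (by rw [hw, hc, mul_zero, zero_mul])
  refine ⟨b, c, hc0, hc.symm.trans hb, fun t ⟨e, he⟩ ↦ ?_⟩
  have hat : a * t = s * e := by
    apply mul_right_cancel₀ hc0
    calc a * t * c = s * b * t := by rw [← hb, hc]; ring
      _ = s * e * c := by rw [mul_assoc, he]; ring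
  obtain ⟨w, hw⟩ := (mem_iff (a * t)).mp ⟨dvd_mul_right a t, hat ▸ dvd_mul_right s e⟩
  exact ⟨w, mul_left_cancel₀ ha (by rw [hw, hc, mul_assoc])⟩

theorem IsAGCD.exists_pow_eq_algebraMap_of_isIntegral (hA : IsAGCD A) {x : K}
    (hx : IsIntegral A x) : ∃ n : ℕ, n ≠ 0 ∧ ∃ u : A, algebraMap A K u = x ^ n := by
  obtain ⟨⟨a, s⟩, hxs : x * algebraMap A K s = algebraMap A K a⟩ := IsLocalization.surj A⁰ x
  have hs : algebraMap A K s ≠ 0 := IsFractionRing.to_map_ne_zero_of_mem_nonZeroDivisors s.2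
  rcases eq_or_ne a 0 with rfl | ha
  · exact ⟨1, one_ne_zero, 0, by simp_all⟩
  obtain ⟨n, hn, z, hz⟩ := hA a s
  obtain ⟨b, c, -, hac, hred⟩ := exists_reduced_fraction_of_inf_eq_span
    (pow_ne_zero n ha) (pow_ne_zero n (nonZeroDivisors.coe_ne_zero s)) hz
  have hxbc : x ^ n * algebraMap A K c = algebraMap A K b := by
    apply mul_left_cancel₀ (pow_ne_zero n hs)
    calc algebraMap A K s ^ n * (x ^ n * algebraMap A K c)
        = algebraMap A K (a ^ n * c) := by rw [map_mul, map_pow, ← hxs]; ring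
      _ = algebraMap A K s ^ n * algebraMap A K b := by rw [hac, map_mul, map_pow]
  obtain ⟨u, hu⟩ := exists_algebraMap_eq_of_isIntegral_of_reduced (hx.pow n) hxbc hred
  exact ⟨n, Nat.one_le_iff_ne_zero.mp hn, u, hu⟩

theorem IsAGCD.isRootExtension_integralClosure (hA : IsAGCD A) :
    Algebra.IsRootExtension A (integralClosure A K) := by
  rintro ⟨x, hx⟩
  obtain ⟨n, hn, u, hu⟩ := hA.exists_pow_eq_algebraMap_of_isIntegral hx
  exact ⟨n, hn, u, Subtype.ext hu⟩

theorem Subalgebra.eq_bot_of_flat_of_isIntegral (B : Subalgebra A K) [Module.Flat A B]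
    [Algebra.IsIntegral A B] : B = ⊥ := by
  refine eq_bot_iff.mpr fun x hx ↦ Algebra.mem_bot.mpr ?_
  obtain ⟨⟨a, s⟩, hxs : x * algebraMap A K s = algebraMap A K a⟩ := IsLocalization.surj A⁰ x
  have ha : algebraMap A B a ∈ (Ideal.span {(s : A)}).map (algebraMap A B) := by
    have : algebraMap A B a = ⟨x, hx⟩ * algebraMap A B s := Subtype.ext hxs.symm
    exact this ▸ Ideal.mul_mem_left _ _
      (Ideal.mem_map_of_mem _ (Ideal.mem_span_singleton_self _))
  -- An integral overring lies over every prime, so `B` is faithfully flat and `sB ∩ A = sA`.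
  have hsa : a ∈ Ideal.span {(s : A)} := by
    rw [← (Ideal.span {(s : A)}).comap_map_eq_self_of_faithfullyFlat (B := B)]
    exact ha
  obtain ⟨u, rfl⟩ := Ideal.mem_span_singleton.mp hsa
  refine ⟨u, mul_right_cancel₀ (IsFractionRing.to_map_ne_zero_of_mem_nonZeroDivisors s.2) ?_⟩
  rw [hxs, ← map_mul, mul_comm]

end

theorem goingDownOverring_of_isRootExtension {A : Type*} [CommRing A] [IsDomain A]
    (B : Subalgebra A (FractionRing A)) [Algebra.IsIntegral A B]
    (hB : Algebra.IsRootExtension A B) : GoingDownOverring A B := by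
  intro P' P hP' _ hle Q hQ hQP
  obtain ⟨Q', hQ', hQ'P'⟩ := Ideal.exists_ideal_over_prime_of_isIntegral_of_isDomain P' (S := B)
    (by simp [(RingHom.injective_iff_ker_eq_bot _).mp (FaithfulSMul.algebraMap_injective A B)])
  exact ⟨Q', hQ', hB.le_of_comap_le (hQ'P' ▸ hQP ▸ hle), hQ'P'⟩

/-- a perinormal AGCD domain is integrally closed. -/
theorem perinormal_agcd_integrally_closed (A : Type*) [CommRing A] [IsDomain A]
    (hA : IsAGCD A) (hperi : Perinormal A) : IsIntegrallyClosed A := by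
  have : Module.Flat A (integralClosure A (FractionRing A)) :=
    hperi _ (goingDownOverring_of_isRootExtension _ hA.isRootExtension_integralClosure)
  exact (IsIntegrallyClosed.integralClosure_eq_bot_iff (FractionRing A)).mp
    (Subalgebra.eq_bot_of_flat_of_isIntegral _)
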